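/- Matching step soundness (lseg/lseg case with allocation): suppose s satisfies the collision condition s(x)=s(x'), s(x)≠s(y), s(x')≠s(z), and the enclosure condition: s(y)≠s(z) implies s(z) ∈ dom(h₁) for any heap satisfying the context; concretely, if s,h ⊨ Σ₀ ∗ lseg(x,y) ∗ lseg(y,z) and (s(y)=s(z) or the value s(z) is the address of some non-empty conjunct of Σ₀ ∗ lseg(x,y)), then s,h ⊨ Σ₀ ∗ lseg(x',z). -/

import Mathlib

def Heap := ℤ → Option ℤ
def Stack := String → ℤ

def hemp : Heap := fun _ => none
def hsingle (a v : ℤ) : Heap := fun l => if l = a then some v else none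
def hdisj (h₁ h₂ : Heap) : Prop := ∀ l, h₁ l = none ∨ h₂ l = none
def hunion (h₁ h₂ : Heap) : Heap := fun l =>
  match h₁ l with
  | some v => some v
  | none => h₂ l
def hdom (h : Heap) : Set ℤ := {l | h l ≠ none}

/-- Acyclic list segment: `Lseg a b h` means `h` is a list segment from `a` to `b`. -/
inductive Lseg : ℤ → ℤ → Heap → Prop
  | nil (a : ℤ) : Lseg a a hemp
  | cons {a b c : ℤ} {h : Heap} (hne : a ≠ b) (hfresh : h a = none)
      (ht : Lseg c b h) : Lseg a b (hunion (hsingle a c) h)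

/-- Spatial predicates. -/
inductive SP where
  | emp : SP
  | next (x y : String) : SP
  | lseg (x y : String) : SP

/-- Satisfaction of a single spatial predicate. -/
def sat (s : Stack) (h : Heap) : SP → Prop
  | .emp => h = hemp
  | .next x y => h = hsingle (s x) (s y)
  | .lseg x y => Lseg (s x) (s y) h

/-- Satisfaction of a spatial conjunction (list of predicates). -/
def satList (s : Stack) (h : Heap) : List SP → Prop
  | [] => h = hemp
  | S :: Sg => ∃ h₁ h₂, hdisj h₁ h₂ ∧ h = hunion h₁ h₂ ∧ sat s h₁ S ∧ satList s h₂ Sg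

/-- Emptiness condition of a spatial predicate. -/
def emptyCond (s : Stack) : SP → Prop
  | .emp => True
  | .next _ _ => False
  | .lseg x y => s x = s y

/-- Address of a spatial predicate (dummy value 0 for `emp`, which is always empty). -/
def addrVal (s : Stack) : SP → ℤ
  | .emp => 0
  | .next x _ => s x
  | .lseg x _ => s x

def collide (s : Stack) (S S' : SP) : Prop :=
  ¬ emptyCond s S ∧ ¬ emptyCond s S' ∧ addrVal s S = addrVal s S'

def wellFormed (s : Stack) (Sg : List SP) : Prop :=
  List.Pairwise (fun S S' => ¬ collide s S S') Sg

/-!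
Split `h = h₁ ∪ h₂ ∪ h₃` along `lseg(x,y) ∗ lseg(y,z) ∗ Σ₀`. If `s y = s z` the middle segment
is empty and `h₁` already is a segment from `x' = x` to `z`. Otherwise `s z` is allocated by a
non-empty conjunct: it cannot be `lseg(x,y)`, whose address `s x = s x'` differs from `s z`, so it
lies in `Σ₀` and `s z ∈ dom h₃`. Disjointness then keeps `z` out of `dom h₁`, which is exactly
what is needed for the concatenation of the two segments to stay acyclic.
-/

@[simp]
lemma hunion_eq_none_iff {h₁ h₂ : Heap} {l : ℤ} :
    hunion h₁ h₂ l = none ↔ h₁ l = none ∧ h₂ l = none := by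
  simp only [hunion]; cases h₁ l <;> simp

@[simp]
lemma hsingle_eq_none_iff {a v l : ℤ} : hsingle a v l = none ↔ l ≠ a := by
  simp [hsingle]

lemma hunion_hemp (h : Heap) : hunion h hemp = h := by
  funext l; simp only [hunion, hemp]; cases h l <;> rfl

lemma hunion_assoc (h₁ h₂ h₃ : Heap) :
    hunion (hunion h₁ h₂) h₃ = hunion h₁ (hunion h₂ h₃) := by
  funext l; simp only [hunion]; cases h₁ l <;> cases h₂ l <;> rfl

lemma hdisj_hunion_left_iff {h₁ h₂ h₃ : Heap} :
    hdisj (hunion h₁ h₂) h₃ ↔ hdisj h₁ h₃ ∧ hdisj h₂ h₃ := by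
  simp only [hdisj, hunion_eq_none_iff, and_or_right, forall_and]

lemma hdisj_hunion_right_iff {h₁ h₂ h₃ : Heap} :
    hdisj h₁ (hunion h₂ h₃) ↔ hdisj h₁ h₂ ∧ hdisj h₁ h₃ := by
  simp only [hdisj, hunion_eq_none_iff, or_and_left, forall_and]

lemma hunion_ne_none_of_left {h₁ h₂ : Heap} {l : ℤ} (hl : h₁ l ≠ none) :
    hunion h₁ h₂ l ≠ none := fun h => hl (hunion_eq_none_iff.mp h).1

lemma hunion_ne_none_of_right {h₁ h₂ : Heap} {l : ℤ} (hl : h₂ l ≠ none) :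
    hunion h₁ h₂ l ≠ none := fun h => hl (hunion_eq_none_iff.mp h).2

namespace Lseg

lemma eq_hemp_of_self {a : ℤ} {h : Heap} (hl : Lseg a a h) : h = hemp := by
  cases hl with
  | nil => rfl
  | cons hne => exact absurd rfl hne

lemma head_mem_hdom {a b : ℤ} {h : Heap} (hl : Lseg a b h) (hab : a ≠ b) : a ∈ hdom h := by
  cases hl with
  | nil => exact absurd rfl hab
  | cons => simp [hdom, hunion, hsingle]

/-- The side condition `h₁ c = none` rules out the first segment running through `c`, which
would make the concatenation cyclic. -/
lemma append {a b c : ℤ} {h₁ h₂ : Heap} (hl₁ : Lseg a b h₁) (hl₂ : Lseg b c h₂)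
    (hd : hdisj h₁ h₂) (hc : h₁ c = none) : Lseg a c (hunion h₁ h₂) := by
  induction hl₁ with
  | nil => exact hl₂
  | @cons a b d t hab hfresh _ ih =>
    obtain ⟨hd_single, hd_tail⟩ := hdisj_hunion_left_iff.mp hd
    obtain ⟨hca, htc⟩ := hunion_eq_none_iff.mp hc
    have h₂a : h₂ a = none := (hd_single a).resolve_left (by simp)
    rw [hunion_assoc]
    exact cons (Ne.symm (hsingle_eq_none_iff.mp hca))
      (hunion_eq_none_iff.mpr ⟨hfresh, h₂a⟩) (ih hl₂ hd_tail htc)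

end Lseg

lemma sat_addrVal_mem_hdom {s : Stack} {h : Heap} {S : SP}
    (hs : sat s h S) (hS : ¬ emptyCond s S) : addrVal s S ∈ hdom h := by
  cases S with
  | emp => exact absurd trivial hS
  | next x y => simp only [sat] at hs; simp [hs, hdom, addrVal, hsingle]
  | lseg x y => exact Lseg.head_mem_hdom hs hS

lemma satList_addrVal_mem_hdom {s : Stack} {h : Heap} {Sg : List SP} {S : SP}
    (hs : satList s h Sg) (hmem : S ∈ Sg) (hS : ¬ emptyCond s S) : addrVal s S ∈ hdom h := by
  induction Sg generalizing h with
  | nil => cases hmem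
  | cons T Tg ih =>
    obtain ⟨h₁, h₂, -, rfl, hT, hTg⟩ := hs
    rcases List.mem_cons.mp hmem with rfl | hmem
    · exact hunion_ne_none_of_left (sat_addrVal_mem_hdom hT hS)
    · exact hunion_ne_none_of_right (ih hTg hmem)

theorem stmt13_general (s : Stack) (h : Heap) (Sg : List SP) (x x' y z : String)
    (hcol : s x = s x') (hne2 : s x' ≠ s z)
    (hs : satList s h (.lseg x y :: .lseg y z :: Sg))
    (hcheck : s y = s z ∨
      ∃ S ∈ (SP.lseg x y :: Sg), ¬ emptyCond s S ∧ s z = addrVal s S) :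
    satList s h (.lseg x' z :: Sg) := by
  obtain ⟨h₁, _, hd₁, rfl, hxy, h₂, h₃, hd₂, rfl, hyz, hSg⟩ := hs
  simp only [sat] at hxy hyz
  obtain ⟨hd₁₂, hd₁₃⟩ := hdisj_hunion_right_iff.mp hd₁
  refine ⟨hunion h₁ h₂, h₃, hdisj_hunion_left_iff.mpr ⟨hd₁₃, hd₂⟩, (hunion_assoc ..).symm, ?_, hSg⟩
  show Lseg (s x') (s z) (hunion h₁ h₂)
  rw [← hcol]
  rcases hcheck with hyz_eq | ⟨S, hmem, hS, hz⟩
  · rw [hyz_eq] at hxy hyz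
    rw [hyz.eq_hemp_of_self, hunion_hemp]
    exact hxy
  rcases List.mem_cons.mp hmem with rfl | hmem
  · exact absurd (hcol.symm.trans hz.symm) hne2
  have hz₃ : s z ∈ hdom h₃ := hz ▸ satList_addrVal_mem_hdom hSg hmem hS
  exact hxy.append hyz hd₁₂ ((hd₁₃ (s z)).resolve_right hz₃)

theorem stmt13 (s : Stack) (h : Heap) (Sg : List SP) (x x' y z : String)
    (hcol : s x = s x') (hne1 : s x ≠ s y) (hne2 : s x' ≠ s z)
    (hs : satList s h (.lseg x y :: .lseg y z :: Sg))
    (hcheck : s y = s z ∨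
      ∃ S ∈ (SP.lseg x y :: Sg), ¬ emptyCond s S ∧ s z = addrVal s S) :
    satList s h (.lseg x' z :: Sg) :=
  stmt13_general s h Sg x x' y z hcol hne2 hs hcheck
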